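/- Let D and D̃ be self-adjoint operators on a complex Hilbert space H with dom(D) = dom(D̃), and suppose there is a constant A ≥ 0 such that ‖(D̃ − D)u‖ ≤ A(‖Du‖ + ‖u‖) for all u ∈ dom(D). Then for all t ∈ (0,1], the resolvents R_t = (I+itD)⁻¹ and R̃_t = (I+itD̃)⁻¹ satisfy ‖R̃_t − R_t‖ ≤ 2A. -/

import Mathlib

/-!
For a symmetric operator `T` and real `t` one has `‖x + itTx‖² = ‖x‖² + t²‖Tx‖²`, because
`⟪x, Tx⟫` is real. Hence `1 + itT` is injective, and any right inverse `R_t` of it satisfies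
`‖R_t u‖ ≤ ‖u‖` and `|t| ‖T R_t u‖ ≤ ‖u‖`. Injectivity of `1 + itD̃` gives the resolvent identity
`R̃_t − R_t = R̃_t (it(D − D̃)) R_t`, and the relative bound together with the two estimates
gives `‖R̃_t − R_t‖ ≤ A (|t| + 1) ≤ 2A` for `|t| ≤ 1`.
-/

open Complex

namespace LinearPMap

variable {E : Type*} [NormedAddCommGroup E] [InnerProductSpace ℂ E]

theorem _root_.IsSelfAdjoint.isFormalAdjoint [CompleteSpace E] {A : E →ₗ.[ℂ] E}
    (hA : IsSelfAdjoint A) : A.IsFormalAdjoint A := by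
  have h := adjoint_isFormalAdjoint hA.dense_domain
  rwa [isSelfAdjoint_def.mp hA] at h

/-- The resolvent `(1 + itT)⁻¹`, encoded as a right inverse of `1 + itT`. -/
def IsRightInvOneAddISMul (T : E →ₗ.[ℂ] E) (t : ℝ) (R : E → E) : Prop :=
  ∀ u, ∃ h : R u ∈ T.domain, R u + (I * t) • T ⟨R u, h⟩ = u

namespace IsFormalAdjoint

variable {T : E →ₗ.[ℂ] E} (hT : T.IsFormalAdjoint T) (t : ℝ)
include hT

theorem norm_add_I_smul_sq (x : T.domain) :
    ‖(x : E) + (I * t) • T x‖ ^ 2 = ‖(x : E)‖ ^ 2 + t ^ 2 * ‖T x‖ ^ 2 := by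
  have him : (inner ℂ (x : E) (T x)).im = 0 :=
    conj_eq_iff_im.mp <| by rw [inner_conj_symm]; exact hT x x
  have hre : RCLike.re (inner ℂ (x : E) ((I * t) • T x)) = 0 := by
    simp [him]
  rw [@norm_add_sq ℂ, hre, norm_smul, norm_mul, norm_I, norm_real, Real.norm_eq_abs, one_mul,
    mul_pow, sq_abs]
  ring

theorem norm_le_norm_add_I_smul (x : T.domain) : ‖(x : E)‖ ≤ ‖(x : E) + (I * t) • T x‖ := by
  refine (pow_le_pow_iff_left₀ (norm_nonneg _) (norm_nonneg _) two_ne_zero).mp ?_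
  rw [hT.norm_add_I_smul_sq]
  exact le_add_of_nonneg_right (by positivity)

theorem abs_mul_norm_le_norm_add_I_smul (x : T.domain) :
    |t| * ‖T x‖ ≤ ‖(x : E) + (I * t) • T x‖ := by
  refine (pow_le_pow_iff_left₀ (by positivity) (norm_nonneg _) two_ne_zero).mp ?_
  rw [hT.norm_add_I_smul_sq, mul_pow, sq_abs]
  exact le_add_of_nonneg_left (by positivity)

theorem injective_add_I_smul {x y : T.domain}
    (h : (x : E) + (I * t) • T x = y + (I * t) • T y) : x = y := by
  have hxy := hT.norm_le_norm_add_I_smul t (x - y)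
  rw [Submodule.coe_sub, map_sub, smul_sub, sub_add_sub_comm, h, sub_self, norm_zero,
    norm_le_zero_iff, sub_eq_zero] at hxy
  exact Subtype.ext hxy

variable {t} {R : E → E} (hR : T.IsRightInvOneAddISMul t R)
include hR

theorem apply_eq_of_add_I_smul_eq {u : E} {x : T.domain} (hx : (x : E) + (I * t) • T x = u) :
    R u = x := by
  obtain ⟨h, hRu⟩ := hR u
  exact congrArg Subtype.val (hT.injective_add_I_smul t (x := ⟨R u, h⟩) (hRu.trans hx.symm))

theorem norm_apply_le (u : E) : ‖R u‖ ≤ ‖u‖ := by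
  obtain ⟨h, hRu⟩ := hR u
  simpa only [hRu] using hT.norm_le_norm_add_I_smul t ⟨R u, h⟩

theorem abs_mul_norm_apply_le (u : E) (h : R u ∈ T.domain) : |t| * ‖T ⟨R u, h⟩‖ ≤ ‖u‖ := by
  obtain ⟨_, hRu⟩ := hR u
  simpa only [hRu] using hT.abs_mul_norm_le_norm_add_I_smul t ⟨R u, h⟩

end IsFormalAdjoint

section Perturbation

variable {T T' : E →ₗ.[ℂ] E} (hdom : T.domain ≤ T'.domain) {t : ℝ} {R R' : E →L[ℂ] E}
  (hR : T.IsRightInvOneAddISMul t R) (hR' : T'.IsRightInvOneAddISMul t R')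
include hdom hR hR'

theorem IsFormalAdjoint.resolvent_sub_apply (hT' : T'.IsFormalAdjoint T') (v : E)
    (hv : R v ∈ T.domain) :
    (R' - R) v = -R' ((I * t) • (T' ⟨R v, hdom hv⟩ - T ⟨R v, hv⟩)) := by
  have hfix : R' (v + (I * t) • (T' ⟨R v, hdom hv⟩ - T ⟨R v, hv⟩)) = R v := by
    refine hT'.apply_eq_of_add_I_smul_eq hR' (x := ⟨R v, hdom hv⟩) ?_
    have hRv : R v + (I * t) • T ⟨R v, hv⟩ = v := (hR v).2
    linear_combination (norm := module) hRv
  rw [R'.map_add, ← eq_sub_iff_add_eq] at hfix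
  rw [_root_.sub_apply, hfix]
  abel

theorem IsFormalAdjoint.norm_resolvent_sub_le (hT : T.IsFormalAdjoint T)
    (hT' : T'.IsFormalAdjoint T') {A : ℝ} (hA : 0 ≤ A)
    (hrel : ∀ (u : E) (hu : u ∈ T.domain) (hu' : u ∈ T'.domain),
      ‖T' ⟨u, hu'⟩ - T ⟨u, hu⟩‖ ≤ A * (‖T ⟨u, hu⟩‖ + ‖u‖))
    (ht : |t| ≤ 1) : ‖R' - R‖ ≤ 2 * A := by
  refine ContinuousLinearMap.opNorm_le_bound _ (by positivity) fun v => ?_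
  obtain ⟨hv, -⟩ := hR v
  have hTRv := hT.abs_mul_norm_apply_le hR v hv
  have htRv : |t| * ‖R v‖ ≤ ‖v‖ :=
    (mul_le_of_le_one_left (norm_nonneg _) ht).trans (hT.norm_apply_le hR v)
  rw [hT'.resolvent_sub_apply hdom hR hR' v hv, norm_neg]
  calc ‖R' ((I * t) • (T' ⟨R v, hdom hv⟩ - T ⟨R v, hv⟩))‖
      ≤ |t| * ‖T' ⟨R v, hdom hv⟩ - T ⟨R v, hv⟩‖ := by
        simp only [_root_.map_smul, norm_smul, norm_mul, norm_I, norm_real, one_mul,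
          Real.norm_eq_abs]
        gcongr
        exact hT'.norm_apply_le hR' _
    _ ≤ |t| * (A * (‖T ⟨R v, hv⟩‖ + ‖R v‖)) := by gcongr; exact hrel _ hv _
    _ = A * (|t| * ‖T ⟨R v, hv⟩‖) + A * (|t| * ‖R v‖) := by ring
    _ ≤ A * ‖v‖ + A * ‖v‖ := by gcongr
    _ = 2 * A * ‖v‖ := by ring

end Perturbation

end LinearPMap

/-- Let `D`, `D̃` be self-adjoint operators on a complex Hilbert space with
`dom D = dom D̃`, and suppose `‖(D̃ − D)u‖ ≤ A (‖Du‖ + ‖u‖)` for all `u ∈ dom D`.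
Then for all `t ∈ (0,1]`, the resolvents `R t = (I + itD)⁻¹` and
`R' t = (I + itD̃)⁻¹` satisfy `‖R' t − R t‖ ≤ 2A`. -/
theorem stmt14 {H : Type*} [NormedAddCommGroup H] [InnerProductSpace ℂ H] [CompleteSpace H]
    (D D' : H →ₗ.[ℂ] H) (hD : IsSelfAdjoint D) (hD' : IsSelfAdjoint D')
    (hdom : D.domain = D'.domain)
    (A : ℝ) (hA : 0 ≤ A)
    (hrel : ∀ (u : H) (hu : u ∈ D.domain) (hu' : u ∈ D'.domain),
        ‖D' ⟨u, hu'⟩ - D ⟨u, hu⟩‖ ≤ A * (‖D ⟨u, hu⟩‖ + ‖u‖))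
    (R R' : ℝ → H →L[ℂ] H)
    (hR : ∀ t : ℝ, t ≠ 0 → ∀ u : H,
      ∃ h1 : R t u ∈ D.domain,
        R t u + (Complex.I * (t : ℂ)) • D ⟨R t u, h1⟩ = u)
    (hR' : ∀ t : ℝ, t ≠ 0 → ∀ u : H,
      ∃ h1 : R' t u ∈ D'.domain,
        R' t u + (Complex.I * (t : ℂ)) • D' ⟨R' t u, h1⟩ = u) :
    ∀ t : ℝ, t ∈ Set.Ioc (0 : ℝ) 1 → ‖R' t - R t‖ ≤ 2 * A := by
  rintro t ⟨ht0, ht1⟩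
  exact hD.isFormalAdjoint.norm_resolvent_sub_le hdom.le (hR t ht0.ne') (hR' t ht0.ne')
    hD'.isFormalAdjoint hA hrel (abs_le.mpr ⟨by linarith, ht1⟩)
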